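/- If a system of random variables is simply consistently connected, then a coupling of it is multimaximally connected if and only if it is identically connected. Consequently, for simply consistently connected systems the Contextuality-by-Default definition of noncontextuality (existence of a multimaximally connected coupling) coincides with the sheaf-theoretic definition (existence of an identically connected coupling). -/

import Mathlib

abbrev Sgn : Type := ({-1, 1} : Finset ℤ)

def one : Sgn := ⟨1, by decide⟩

structure FDist (X : Type) [Fintype X] where
  m : X → ℝ
  nonneg : ∀ x, 0 ≤ m x
  total : ∑ x, m x = 1

def push {X Y : Type} [Fintype X] [DecidableEq Y] (p : X → ℝ) (f : X → Y) : Y → ℝ :=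
  fun y => ∑ x, if f x = y then p x else 0

section Systems

variable {Q C : Type} [Fintype Q] [Fintype C] [DecidableEq Q] [DecidableEq C]

abbrev Glob (pre : Q → C → Bool) : Type := {qc : Q × C // pre qc.1 qc.2}

def restr (pre : Q → C → Bool) (c : C) (f : Glob pre → Sgn) : {q : Q // pre q c} → Sgn :=
  fun q => f ⟨(q.1, c), q.2⟩

variable (pre : Q → C → Bool) (R : (c : C) → FDist ({q : Q // pre q c} → Sgn))

def IsCoupling (T : FDist (Glob pre → Sgn)) : Prop :=
  ∀ c : C, push T.m (restr pre c) = (R c).m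

def marg (c : C) (q : Q) (h : pre q c) : Sgn → ℝ :=
  push (R c).m (fun f => f ⟨q, h⟩)

def SimplyCC : Prop :=
  ∀ (q : Q) (c c' : C) (h : pre q c) (h' : pre q c'), marg pre R c q h = marg pre R c' q h'

def StronglyCC : Prop :=
  ∀ c c' : C,
    push (R c).m (fun f (q : {q : Q // pre q c ∧ pre q c'}) => f ⟨q.1, q.2.1⟩)
    = push (R c').m (fun f (q : {q : Q // pre q c ∧ pre q c'}) => f ⟨q.1, q.2.2⟩)

def prAgree (T : FDist (Glob pre → Sgn)) (q : Q) (c c' : C) (h : pre q c) (h' : pre q c') : ℝ :=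
  ∑ f, if f ⟨(q, c), h⟩ = f ⟨(q, c'), h'⟩ then T.m f else 0

def IdConn (T : FDist (Glob pre → Sgn)) : Prop :=
  ∀ (q : Q) (c c' : C) (h : pre q c) (h' : pre q c'), prAgree pre T q c c' h h' = 1

def IsAlphaCoupling (s : (Glob pre → Sgn) → ℝ) (α : ℝ) : Prop :=
  (∀ f, 0 ≤ s f) ∧ (∑ f, s f = α) ∧
  ∀ (c : C) (g : {q : Q // pre q c} → Sgn), push s (restr pre c) g ≤ (R c).m g

def IdConnSub (s : (Glob pre → Sgn) → ℝ) : Prop :=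
  ∀ (q : Q) (c c' : C) (h : pre q c) (h' : pre q c'),
    (∑ f, if f ⟨(q, c), h⟩ ≠ f ⟨(q, c'), h'⟩ then s f else 0) = 0

end Systems

/-- x is the maximal diagonal (agreement) probability among couplings of two
distributions on {−1,1} with mass functions μ and ν. -/
def PairMax (μ ν : Sgn → ℝ) (x : ℝ) : Prop :=
  IsGreatest
    {y : ℝ | ∃ W : FDist (Sgn × Sgn),
      push W.m Prod.fst = μ ∧ push W.m Prod.snd = ν ∧
      (∑ z : Sgn × Sgn, if z.1 = z.2 then W.m z else 0) = y} x

/-! When the two marginals coincide, the diagonal coupling puts all its mass on agreement, so the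
maximal agreement probability is `1`. Simple consistent connectedness says that the marginals of
any two copies of a content do coincide. -/

lemma sum_push {X Y : Type} [Fintype X] [Fintype Y] [DecidableEq Y] (p : X → ℝ) (f : X → Y) :
    ∑ y, push p f y = ∑ x, p x := by
  simp only [push]
  rw [Finset.sum_comm]
  simp

lemma push_nonneg {X Y : Type} [Fintype X] [DecidableEq Y] {p : X → ℝ} (hp : ∀ x, 0 ≤ p x)
    (f : X → Y) (y : Y) : 0 ≤ push p f y :=
  Finset.sum_nonneg fun x _ => by split_ifs <;> simp [hp x]

namespace FDist

variable {X Y : Type} [Fintype X] [Fintype Y] [DecidableEq Y]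

def map (P : FDist X) (f : X → Y) : FDist Y where
  m := push P.m f
  nonneg := push_nonneg P.nonneg f
  total := by rw [sum_push, P.total]

lemma sum_ite_le_one (P : FDist X) (p : X → Prop) [DecidablePred p] :
    ∑ x, (if p x then P.m x else 0) ≤ 1 :=
  P.total ▸ Finset.sum_le_sum fun x _ => by split_ifs <;> simp [P.nonneg x]

def diag (P : FDist Y) : FDist (Y × Y) where
  m z := if z.1 = z.2 then P.m z.1 else 0
  nonneg z := by split_ifs <;> simp [P.nonneg z.1]
  total := by simp [Fintype.sum_prod_type, P.total]

lemma push_diag_fst (P : FDist Y) : push P.diag.m Prod.fst = P.m := by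
  funext y
  simp [push, diag, Fintype.sum_prod_type]

lemma push_diag_snd (P : FDist Y) : push P.diag.m Prod.snd = P.m := by
  funext y
  simp [push, diag, Fintype.sum_prod_type]

lemma sum_diag_agree (P : FDist Y) :
    ∑ z : Y × Y, (if z.1 = z.2 then P.diag.m z else 0) = 1 := by
  simp [diag, Fintype.sum_prod_type, P.total]

end FDist

lemma pairMax_self_iff (P : FDist Sgn) (x : ℝ) : PairMax P.m P.m x ↔ x = 1 := by
  have hone : PairMax P.m P.m 1 := by
    refine ⟨⟨P.diag, P.push_diag_fst, P.push_diag_snd, P.sum_diag_agree⟩, ?_⟩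
    rintro y ⟨W, -, -, rfl⟩
    exact W.sum_ite_le_one _
  exact ⟨fun hx => hx.unique hone, fun hx => hx ▸ hone⟩

theorem stmt15_general {Q C : Type} [Fintype Q] [Fintype C] [DecidableEq Q] [DecidableEq C]
    (pre : Q → C → Bool) (R : (c : C) → FDist ({q : Q // pre q c} → Sgn))
    (hsimple : SimplyCC pre R)
    (T : FDist (Glob pre → Sgn)) :
    (∀ (q : Q) (c c' : C) (h : pre q c) (h' : pre q c'),
        PairMax (marg pre R c q h) (marg pre R c' q h') (prAgree pre T q c c' h h'))
    ↔ IdConn pre T := by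
  refine forall_congr' fun q => forall_congr' fun c => forall_congr' fun c' =>
    forall_congr' fun h => forall_congr' fun h' => ?_
  rw [← hsimple q c c' h h']
  exact pairMax_self_iff ((R c).map fun f => f ⟨q, h⟩) _

/-- For a simply consistently connected system, a coupling is multimaximally connected
(each agreement probability equals the maximal agreement probability given the two
marginal distributions) iff it is identically connected. Hence the CbD and
sheaf-theoretic definitions of noncontextuality coincide on such systems. -/
theorem stmt15 {Q C : Type} [Fintype Q] [Fintype C] [DecidableEq Q] [DecidableEq C]
    (pre : Q → C → Bool) (R : (c : C) → FDist ({q : Q // pre q c} → Sgn))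
    (hsimple : SimplyCC pre R)
    (T : FDist (Glob pre → Sgn)) (hT : IsCoupling pre R T) :
    (∀ (q : Q) (c c' : C) (h : pre q c) (h' : pre q c'),
        PairMax (marg pre R c q h) (marg pre R c' q h') (prAgree pre T q c c' h h'))
    ↔ IdConn pre T :=
  stmt15_general pre R hsimple T
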